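/- arXiv:2006.06960 — 4 statements merged into one kernel-verified Lean document; each statement's English description precedes it below -/
import Mathlib

section
/- Let a_0, a_1, ..., a_{N-1} be complex numbers. Then for every integer R ≥ 1, |∑_{0≤n<N} a_n|² ≤ ((N-1+R)/R) · ∑_{|r|<R} (1 - |r|/R) · ∑_{0≤n<N, 0≤n+r<N} a_{n+r}·conj(a_n). -/
/-!
Sliding a window of length `R` across the sequence, `R · ∑ aₙ` is the sum over the `N + R - 1`
window positions `m` of the window sums `∑_{s < R} a_{m+s}`. Cauchy–Schwarz over the positions
bounds `R² |∑ aₙ|²` by `(N + R - 1) ∑_m |∑_{s<R} a_{m+s}|²`, and expanding the squares, each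
pair `(s, t)` of offsets contributes the autocorrelation at lag `r = s - t`, which arises from
exactly `R - |r|` pairs.
-/

open Finset
open scoped Classical

/-- e(x) = exp(2πi x) -/
noncomputable def e (x : ℝ) : ℂ := Complex.exp (2 * Real.pi * Complex.I * x)

/-- Denominators of α = [0; 1, m, 1, m, ...]. -/
def ostq (m : ℕ) : ℕ → ℕ
  | 0 => 1
  | 1 => 1
  | (i+2) => (if (i+2) % 2 = 0 then m * ostq m (i+1) else ostq m (i+1)) + ostq m i

/-- φ(m) = (m + 2 + √(m² + 4m))/2. -/
noncomputable def phi (m : ℕ) : ℝ := ((m : ℝ) + 2 + Real.sqrt ((m : ℝ)^2 + 4*m)) / 2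

/-- Partial quotients of α = [0; 1, m, 1, m, ...] : a_j = m if j even, 1 if j odd. -/
def pq (m j : ℕ) : ℕ := if j % 2 = 0 then m else 1

/-- Markov condition on digit sequences. -/
def Markov (m : ℕ) (ε : ℕ → ℕ) : Prop :=
  ε 0 < pq m 1 ∧ ∀ i, 1 ≤ i → ε i ≤ pq m (i+1) ∧ (ε i = pq m (i+1) → ε (i-1) = 0)

/-- ε is the (finitely supported) Ostrowski digit sequence of n. -/
def IsOstRep (m n : ℕ) (ε : ℕ → ℕ) : Prop :=
  Markov m ε ∧ ∃ K, (∀ j, K ≤ j → ε j = 0) ∧ n = ∑ i ∈ Finset.range K, ε i * ostq m i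

/-- The Ostrowski digits of n. -/
noncomputable def ostEps (m n : ℕ) : ℕ → ℕ :=
  if h : ∃ ε, IsOstRep m n ε then h.choose else fun _ => 0

/-- Ostrowski sum-of-digits function S_α. -/
noncomputable def Sfull (m n : ℕ) : ℕ := ∑ᶠ i, ostEps m n i

/-- Truncated Ostrowski sum-of-digits function S_{α,k}. -/
noncomputable def Strunc (m k n : ℕ) : ℕ := ∑ i ∈ Finset.range k, ostEps m n i

/-- Distance to the nearest integer. -/
noncomputable def nint (x : ℝ) : ℝ := |x - round x|

open ComplexConjugate

namespace VanDerCorput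

section Sums

variable {M : Type*} [AddCommMonoid M]

lemma sum_Ico_zero_natCast (f : ℤ → M) (N : ℕ) :
    ∑ n ∈ Ico (0 : ℤ) N, f n = ∑ n ∈ range N, f n := by
  rw [Int.Ico_eq_finset_map, sum_map]
  simp

lemma sum_Ico_eq_of_eq_zero_outside {f : ℤ → M} {N : ℕ} (hf : ∀ n ∉ Ico (0 : ℤ) N, f n = 0)
    {lo hi : ℤ} (hlo : lo ≤ 0) (hhi : N ≤ hi) :
    ∑ n ∈ Ico lo hi, f n = ∑ n ∈ Ico (0 : ℤ) N, f n :=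
  (sum_subset (Ico_subset_Ico hlo hhi) fun n _ hn => hf n hn).symm

lemma sum_Ico_add_eq_of_eq_zero_outside {f : ℤ → M} {N R : ℕ}
    (hf : ∀ n ∉ Ico (0 : ℤ) N, f n = 0) {s : ℤ} (hs : s ∈ Ico (0 : ℤ) R) :
    ∑ m ∈ Ico (1 - R : ℤ) N, f (m + s) = ∑ n ∈ Ico (0 : ℤ) N, f n := by
  rw [mem_Ico] at hs
  rw [sum_Ico_add']
  exact sum_Ico_eq_of_eq_zero_outside hf (by omega) (by omega)

lemma card_filter_sub_eq (R : ℕ) {r : ℤ} (hr : r ∈ Ioo (-(R : ℤ)) R) :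
    #{p ∈ range R ×ˢ range R | (p.1 : ℤ) - p.2 = r} = R - r.natAbs := by
  rw [mem_Ioo] at hr
  have : {p ∈ range R ×ˢ range R | (p.1 : ℤ) - p.2 = r} =
      (range (R - r.natAbs)).image fun i => (i + r.toNat, i + (-r).toNat) := by
    ext ⟨s, t⟩
    simp only [mem_filter, mem_product, mem_range, mem_image, Prod.mk.injEq]
    constructor
    · rintro ⟨⟨hs, ht⟩, rfl⟩
      exact ⟨min s t, by omega, by omega, by omega⟩
    · rintro ⟨i, hi, rfl, rfl⟩
      omega
  rw [this, card_image_of_injective _ fun i j h => by simpa using congrArg Prod.fst h,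
    card_range]

lemma sum_range_sum_range_sub (R : ℕ) (F : ℤ → M) :
    ∑ s ∈ range R, ∑ t ∈ range R, F (s - t) = ∑ r ∈ Ioo (-(R : ℤ)) R, (R - r.natAbs) • F r := by
  rw [← sum_product', ← sum_fiberwise_of_maps_to (g := fun p => (p.1 : ℤ) - p.2)
    (t := Ioo (-(R : ℤ)) R) fun p hp => by simp only [mem_product, mem_range] at hp; simp; omega]
  refine sum_congr rfl fun r hr => ?_
  rw [sum_congr rfl fun p hp => by rw [(mem_filter.1 hp).2], sum_const, card_filter_sub_eq R hr]

end Sums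

variable {𝕜 : Type*} [RCLike 𝕜]

noncomputable def autocorrelation (b : ℤ → 𝕜) (N : ℕ) (r : ℤ) : 𝕜 :=
  ∑ n ∈ Ico (0 : ℤ) N, b (n + r) * conj (b n)

variable {b : ℤ → 𝕜} {N : ℕ}

lemma sum_Ico_mul_conj_eq_autocorrelation (hb : ∀ n ∉ Ico (0 : ℤ) N, b n = 0) {R : ℕ} (s : ℤ)
    {t : ℤ} (ht : t ∈ Ico (0 : ℤ) R) :
    ∑ m ∈ Ico (1 - R : ℤ) N, b (m + s) * conj (b (m + t)) = autocorrelation b N (s - t) := by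
  have hshift (m : ℤ) : b (m + s) * conj (b (m + t)) = b (m + t + (s - t)) * conj (b (m + t)) := by
    rw [add_add_sub_cancel]
  simp_rw [hshift]
  exact sum_Ico_add_eq_of_eq_zero_outside (f := fun n => b (n + (s - t)) * conj (b n))
    (fun n hn => by simp [hb n hn]) ht

lemma sum_norm_sq_window_eq (hb : ∀ n ∉ Ico (0 : ℤ) N, b n = 0) (R : ℕ) :
    ∑ m ∈ Ico (1 - R : ℤ) N, ‖∑ s ∈ range R, b (m + s)‖ ^ 2 =
      RCLike.re (∑ r ∈ Ioo (-(R : ℤ)) R, (R - r.natAbs) • autocorrelation b N r) := by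
  have hnorm (z : 𝕜) : ‖z‖ ^ 2 = RCLike.re (z * conj z) := by
    rw [RCLike.mul_conj, ← RCLike.ofReal_pow, RCLike.ofReal_re]
  rw [← sum_range_sum_range_sub]
  simp_rw [hnorm, ← map_sum]
  congr 1
  simp_rw [map_sum, sum_mul_sum]
  rw [sum_comm]
  refine sum_congr rfl fun s _ => ?_
  rw [sum_comm]
  exact sum_congr rfl fun t ht => sum_Ico_mul_conj_eq_autocorrelation hb s (by simpa using ht)

lemma sum_window_eq (hb : ∀ n ∉ Ico (0 : ℤ) N, b n = 0) (R : ℕ) :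
    ∑ m ∈ Ico (1 - R : ℤ) N, ∑ s ∈ range R, b (m + s) = R • ∑ n ∈ Ico (0 : ℤ) N, b n := by
  rw [sum_comm, sum_congr rfl fun s hs =>
    sum_Ico_add_eq_of_eq_zero_outside hb (by simpa using hs), sum_const, card_range]

lemma sq_mul_norm_sum_le (hb : ∀ n ∉ Ico (0 : ℤ) N, b n = 0) {R : ℕ} (hR : 1 ≤ R) :
    (R * ‖∑ n ∈ Ico (0 : ℤ) N, b n‖) ^ 2 ≤
      (N - 1 + R) * RCLike.re (∑ r ∈ Ioo (-(R : ℤ)) R, (R - r.natAbs) • autocorrelation b N r) := by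
  have hcard : (#(Ico (1 - R : ℤ) N) : ℝ) = N - 1 + R := by
    have : (#(Ico (1 - R : ℤ) N) : ℤ) = N - 1 + R := by
      rw [Int.card_Ico, Int.toNat_of_nonneg (by omega)]
      ring
    exact_mod_cast this
  calc (R * ‖∑ n ∈ Ico (0 : ℤ) N, b n‖) ^ 2
      = ‖∑ m ∈ Ico (1 - R : ℤ) N, ∑ s ∈ range R, b (m + s)‖ ^ 2 := by
        rw [sum_window_eq hb, nsmul_eq_mul, norm_mul, RCLike.norm_natCast]
    _ ≤ (∑ m ∈ Ico (1 - R : ℤ) N, ‖∑ s ∈ range R, b (m + s)‖) ^ 2 :=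
        pow_le_pow_left₀ (norm_nonneg _) (norm_sum_le _ _) 2
    _ ≤ #(Ico (1 - R : ℤ) N) * ∑ m ∈ Ico (1 - R : ℤ) N, ‖∑ s ∈ range R, b (m + s)‖ ^ 2 :=
        sq_sum_le_card_mul_sum_sq
    _ = _ := by rw [hcard, sum_norm_sq_window_eq hb]

lemma re_sum_weighted_autocorrelation (R : ℕ) :
    RCLike.re (∑ r ∈ Ioo (-(R : ℤ)) R, (R - r.natAbs) • autocorrelation b N r) =
      R * RCLike.re (∑ r ∈ Ioo (-(R : ℤ)) R,
        ((1 - |(r : ℝ)| / R : ℝ) : 𝕜) * autocorrelation b N r) := by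
  simp only [map_sum, mul_sum]
  refine sum_congr rfl fun r hr => ?_
  rw [map_nsmul, nsmul_eq_mul, RCLike.re_ofReal_mul, ← mul_assoc]
  congr 1
  rw [mem_Ioo] at hr
  have hR : (R : ℝ) ≠ 0 := by exact_mod_cast (show R ≠ 0 by omega)
  rw [Nat.cast_sub (by omega), Nat.cast_natAbs, Int.cast_abs]
  field_simp

theorem norm_sum_sq_le (hb : ∀ n ∉ Ico (0 : ℤ) N, b n = 0) {R : ℕ} (hR : 1 ≤ R) :
    ‖∑ n ∈ Ico (0 : ℤ) N, b n‖ ^ 2 ≤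
      ((N - 1 + R : ℝ) / R) * RCLike.re (∑ r ∈ Ioo (-(R : ℤ)) R,
        ((1 - |(r : ℝ)| / R : ℝ) : 𝕜) * autocorrelation b N r) := by
  have hR' : (0 : ℝ) < R := by exact_mod_cast hR
  have h := sq_mul_norm_sum_le hb hR
  rw [re_sum_weighted_autocorrelation, mul_pow, mul_left_comm] at h
  rw [div_mul_eq_mul_div, le_div_iff₀ hR']
  nlinarith

end VanDerCorput

theorem stmt1 (N R : ℕ) (hR : 1 ≤ R) (a : ℕ → ℂ) :
    ‖∑ n ∈ Finset.range N, a n‖ ^ 2 ≤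
      (((N : ℝ) - 1 + R) / R) *
        (∑ r ∈ Finset.Ioo (-(R : ℤ)) (R : ℤ),
          ((1 - |(r : ℝ)| / R : ℝ) : ℂ) *
            ∑ n ∈ Finset.range N,
              if 0 ≤ (n : ℤ) + r ∧ (n : ℤ) + r < (N : ℤ) then
                a ((n : ℤ) + r).toNat * (starRingEnd ℂ) (a n)
              else 0).re := by
  set b : ℤ → ℂ := fun n => if 0 ≤ n ∧ n < N then a n.toNat else 0
  have hb : ∀ n ∉ Ico (0 : ℤ) N, b n = 0 := fun n hn => if_neg (by simpa using hn)
  have hb_natCast {n : ℕ} (hn : n ∈ range N) : b n = a n := by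
    simp [b, mem_range.mp hn]
  have hsum : ∑ n ∈ Ico (0 : ℤ) N, b n = ∑ n ∈ range N, a n := by
    rw [VanDerCorput.sum_Ico_zero_natCast]
    exact sum_congr rfl fun n hn => hb_natCast hn
  have hauto (r : ℤ) : VanDerCorput.autocorrelation b N r = ∑ n ∈ range N,
      if 0 ≤ (n : ℤ) + r ∧ (n : ℤ) + r < N then a ((n : ℤ) + r).toNat * conj (a n) else 0 := by
    rw [VanDerCorput.autocorrelation, VanDerCorput.sum_Ico_zero_natCast]
    refine sum_congr rfl fun n hn => ?_
    rw [hb_natCast hn, ite_mul, zero_mul]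
  simpa [hsum, hauto] using VanDerCorput.norm_sum_sq_le (𝕜 := ℂ) hb hR
end

section
/- Let m ≥ 2 and define q_i as: q_0 = q_1 = 1, q_{i} = m·q_{i-1} + q_{i-2} for even i, q_i = q_{i-1} + q_{i-2} for odd i. Then q is strictly increasing for i ≥ 1 and every nonnegative integer n admits a representation n = ∑_{i≥0} ε_i·q_i with integer digits ε_i ≥ 0 such that ∑_{0≤i<K} ε_i·q_i < q_K for every K ≥ 1. -/
open Finset
open scoped Classical

section GreedyDigits

variable {q : ℕ → ℕ}

/-- Greedy step: the top digit is `n / q K` and the lower digits represent `n % q K < q K`. -/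
theorem exists_greedy_digits_of_lt (h1 : q 1 = 1) (hq : MonotoneOn q (Set.Ici 1)) {K : ℕ}
    (hK : 1 ≤ K) {n : ℕ} (hn : n < q K) :
    ∃ ε : ℕ → ℕ, (∀ j, K ≤ j → ε j = 0) ∧ n = ∑ i ∈ range K, ε i * q i ∧
      ∀ L, 1 ≤ L → ∑ i ∈ range L, ε i * q i < q L := by
  have hpos : ∀ L, 1 ≤ L → 0 < q L := fun L hL =>
    Nat.lt_of_lt_of_le Nat.zero_lt_one (h1 ▸ hq (Set.mem_Ici.2 le_rfl) (Set.mem_Ici.2 hL) hL)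
  induction K, hK using Nat.le_induction generalizing n with
  | base =>
    obtain rfl : n = 0 := by omega
    exact ⟨0, fun _ _ => rfl, by simp, fun L hL => by simpa using hpos L hL⟩
  | succ K hK ih =>
    obtain ⟨ε, hε0, hεsum, hεpart⟩ := ih (Nat.mod_lt n (hpos K hK))
    have hlow : ∀ L, L ≤ K →
        ∑ i ∈ range L, Function.update ε K (n / q K) i * q i = ∑ i ∈ range L, ε i * q i :=
      fun L hL => sum_congr rfl fun i hi => by
        rw [Function.update_of_ne ((mem_range.1 hi).trans_le hL).ne]
    have hzero : ∀ j, K + 1 ≤ j → Function.update ε K (n / q K) j * q j = 0 := fun j hj => by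
      rw [Function.update_of_ne (by omega), hε0 j (by omega), zero_mul]
    have hsum : n = ∑ i ∈ range (K + 1), Function.update ε K (n / q K) i * q i := by
      rw [sum_range_succ, hlow K le_rfl, ← hεsum, Function.update_self, mul_comm,
        Nat.mod_add_div]
    refine ⟨Function.update ε K (n / q K), fun j hj => ?_, hsum, fun L hL => ?_⟩
    · rw [Function.update_of_ne (by omega), hε0 j (by omega)]
    · rcases le_or_gt L K with hLK | hKL
      · rw [hlow L hLK]
        exact hεpart L hL
      · rw [eventually_constant_sum hzero hKL, ← hsum]
        exact hn.trans_le (hq (Set.mem_Ici.2 (by omega)) (Set.mem_Ici.2 hL) hKL)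

theorem exists_greedy_digits (h1 : q 1 = 1) (hq : StrictMonoOn q (Set.Ici 1)) (n : ℕ) :
    ∃ ε : ℕ → ℕ, (∃ K, (∀ j, K ≤ j → ε j = 0) ∧ n = ∑ i ∈ range K, ε i * q i) ∧
      ∀ L, 1 ≤ L → ∑ i ∈ range L, ε i * q i < q L := by
  have hshift : StrictMono fun i => q (i + 1) := fun a b hab =>
    hq (Set.mem_Ici.2 (by omega)) (Set.mem_Ici.2 (by omega)) (by omega)
  have hn : n < q (n + 1) := by simpa [h1] using hshift.add_le_nat n 0
  obtain ⟨ε, hε0, hεsum, hεpart⟩ := exists_greedy_digits_of_lt h1 hq.monotoneOn (by omega)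
    hn
  exact ⟨ε, ⟨n + 1, hε0, hεsum⟩, hεpart⟩

end GreedyDigits

theorem ostq_pos (m : ℕ) : ∀ i, 0 < ostq m i
  | 0 => Nat.one_pos
  | 1 => Nat.one_pos
  | i + 2 => by
    rw [ostq]
    have := ostq_pos m i
    omega

theorem ostq_lt_ostq_succ {m : ℕ} (hm : 1 ≤ m) (i : ℕ) : ostq m (i + 1) < ostq m (i + 2) := by
  have hi := ostq_pos m i
  have hmul : ostq m (i + 1) ≤ m * ostq m (i + 1) := Nat.le_mul_of_pos_left _ hm
  rw [ostq]
  split_ifs <;> omega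

theorem strictMonoOn_ostq {m : ℕ} (hm : 1 ≤ m) : StrictMonoOn (ostq m) (Set.Ici 1) :=
  strictMonoOn_Ici_of_pred_lt fun k hk => by
    obtain ⟨i, rfl⟩ : ∃ i, k = i + 2 := ⟨k - 2, by omega⟩
    exact ostq_lt_ostq_succ hm i

theorem stmt3 (m : ℕ) (hm : 2 ≤ m) :
    (∀ i j : ℕ, 1 ≤ i → i < j → ostq m i < ostq m j) ∧
    ∀ n : ℕ, ∃ ε : ℕ → ℕ,
      (∃ K : ℕ, (∀ j, K ≤ j → ε j = 0) ∧ n = ∑ i ∈ Finset.range K, ε i * ostq m i) ∧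
      ∀ K : ℕ, 1 ≤ K → ∑ i ∈ Finset.range K, ε i * ostq m i < ostq m K := by
  have hq := strictMonoOn_ostq (by omega : 1 ≤ m)
  exact ⟨fun i j hi hij => hq (Set.mem_Ici.2 hi) (Set.mem_Ici.2 (hi.trans hij.le)) hij,
    exists_greedy_digits rfl hq⟩
end

section
/- Let φ be a badly approximable irrational number, i.e., there exists C > 0 with ‖hφ‖ ≥ C/h for all positive integers h. Then for every finite interval I of integers, every real t, and every real K ≥ 1, one has ∑_{h∈I} min(K, ‖t + hφ‖^{−2}) ≪ √K·|I| + K·log(2 + |I|), with an implied constant depending only on φ. -/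
open Finset
open scoped Classical

/-! If `‖hφ‖ ≥ C / h`, the `N = |I|` points `t + hφ`, `h ∈ I`, are `C / N`-separated modulo `1`.
Sorting them by the side of the nearest integer on which they lie and by `⌊‖t + hφ‖ / δ⌋`, with
`δ = C / N`, puts at most one point in each class, so the sum is at most
`2 ∑ₖ min(K, (kδ)⁻²) ≪ K + √K / δ = K + √K N / C`. -/

/-- `min(K, r⁻²)`, with the value `K` at `r = 0`, where `(0 ^ 2)⁻¹` is the junk value `0`. -/
noncomputable def clippedInvSq (K r : ℝ) : ℝ := if r = 0 then K else min K (r ^ 2)⁻¹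

lemma clippedInvSq_nonneg {K : ℝ} (hK : 0 ≤ K) (r : ℝ) : 0 ≤ clippedInvSq K r := by
  unfold clippedInvSq
  split_ifs
  exacts [hK, le_min hK (by positivity)]

lemma clippedInvSq_antitoneOn (K : ℝ) : AntitoneOn (clippedInvSq K) (Set.Ici 0) := by
  intro r hr r' _ hrr'
  rcases (Set.mem_Ici.mp hr).eq_or_lt with rfl | hr0
  · calc clippedInvSq K r' ≤ K := by
          unfold clippedInvSq
          split_ifs
          exacts [le_rfl, min_le_left _ _]
      _ = clippedInvSq K 0 := by simp [clippedInvSq]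
  · rw [clippedInvSq, clippedInvSq, if_neg hr0.ne', if_neg (hr0.trans_le hrr').ne']
    gcongr

lemma sum_range_min_inv_sq_le {K s : ℝ} (hK : 0 < K) (hs : 0 < s) (n : ℕ) :
    ∑ k ∈ range n, min K ((((k : ℝ) + 1) * s) ^ 2)⁻¹ ≤ 3 * √K / s := by
  set f : ℕ → ℝ := fun k => min K ((((k : ℝ) + 1) * s) ^ 2)⁻¹
  have hf : ∀ k, 0 ≤ f k := fun k => le_min hK.le (by positivity)
  have hsK : 0 < s * √K := by positivity
  -- the terms are `K` up to `k₀ ≈ 1 / (s √K)` and `((k + 1) s)⁻²` afterwards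
  set k₀ := ⌊(s * √K)⁻¹⌋₊
  have head : ∑ k ∈ range k₀, f k ≤ √K / s := by
    calc ∑ k ∈ range k₀, f k ≤ ∑ _k ∈ range k₀, K := sum_le_sum fun k _ => min_le_left _ _
      _ = k₀ * K := by simp
      _ ≤ (s * √K)⁻¹ * K := by gcongr; exact Nat.floor_le (by positivity)
      _ = √K / s := by
        field_simp
        rw [Real.sq_sqrt hK.le]
  have tail : ∑ k ∈ Ico k₀ (k₀ + n), f k ≤ 2 * √K / s := by
    calc ∑ k ∈ Ico k₀ (k₀ + n), f k
        ≤ ∑ k ∈ Ico k₀ (k₀ + n), (s ^ 2)⁻¹ * (((k + 1 : ℕ) : ℝ) ^ 2)⁻¹ :=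
          sum_le_sum fun k _ => (min_le_right _ _).trans_eq <| by
            push_cast
            rw [mul_pow, mul_inv, mul_comm]
      _ = (s ^ 2)⁻¹ * ∑ i ∈ Ico (k₀ + 1) (k₀ + n + 1), ((i : ℝ) ^ 2)⁻¹ := by
        rw [← mul_sum, sum_Ico_add' (fun i : ℕ => ((i : ℝ) ^ 2)⁻¹)]
      _ ≤ (s ^ 2)⁻¹ * ∑ i ∈ Ioo k₀ (k₀ + n + 1), ((i : ℝ) ^ 2)⁻¹ := by
        refine mul_le_mul_of_nonneg_left
          (sum_le_sum_of_subset_of_nonneg (fun i hi => ?_) fun i _ _ => by positivity) (by positivity)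
        simp only [mem_Ico, mem_Ioo] at hi ⊢
        omega
      _ ≤ (s ^ 2)⁻¹ * (2 / (k₀ + 1)) := by gcongr; exact sum_Ioo_inv_sq_le _ _
      _ ≤ (s ^ 2)⁻¹ * (2 / (s * √K)⁻¹) := by
        gcongr
        exact (Nat.lt_floor_add_one _).le
      _ = 2 * √K / s := by field_simp
  calc ∑ k ∈ range n, f k ≤ ∑ k ∈ range (k₀ + n), f k :=
        sum_le_sum_of_subset_of_nonneg (range_subset_range.mpr (by omega)) fun k _ _ => hf k
    _ = ∑ k ∈ range k₀, f k + ∑ k ∈ Ico k₀ (k₀ + n), f k :=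
        (sum_range_add_sum_Ico f (by omega)).symm
    _ ≤ √K / s + 2 * √K / s := add_le_add head tail
    _ = 3 * √K / s := by ring

lemma sum_clippedInvSq_natCast_mul_le {K s : ℝ} (hK : 0 < K) (hs : 0 < s) (U : Finset ℕ) :
    ∑ k ∈ U, clippedInvSq K (k * s) ≤ K + 3 * √K / s := by
  calc ∑ k ∈ U, clippedInvSq K (k * s)
        ≤ ∑ k ∈ range (Finset.sup U id + 1), clippedInvSq K (k * s) :=
        sum_le_sum_of_subset_of_nonneg (subset_range_sup_succ U)
          fun k _ _ => clippedInvSq_nonneg hK.le _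
    _ = ∑ k ∈ range (Finset.sup U id), min K ((((k : ℝ) + 1) * s) ^ 2)⁻¹ + K := by
        rw [sum_range_succ']
        congr 1
        · refine sum_congr rfl fun k _ => ?_
          rw [clippedInvSq, if_neg (by positivity)]
          push_cast
          rfl
        · simp [clippedInvSq]
    _ ≤ K + 3 * √K / s := by linarith [sum_range_min_inv_sq_le hK hs (Finset.sup U id)]

lemma sum_clippedInvSq_le_of_separated {ι : Type*} (S : Finset ι) (r : ι → ℝ) {K δ : ℝ}
    (hK : 0 < K) (hδ : 0 < δ) (hr : ∀ i ∈ S, 0 ≤ r i)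
    (hsep : ∀ i ∈ S, ∀ j ∈ S, i ≠ j → δ ≤ |r i - r j|) :
    ∑ i ∈ S, clippedInvSq K (r i) ≤ K + 3 * √K / δ := by
  set bucket : ι → ℕ := fun i => ⌊r i / δ⌋₊
  have hbucket : ∀ i ∈ S, (bucket i : ℝ) * δ ≤ r i := fun i hi =>
    (le_div_iff₀ hδ).mp (Nat.floor_le (div_nonneg (hr i hi) hδ.le))
  have hinj : Set.InjOn bucket S := by
    intro i hi j hj hij
    by_contra hne
    have hfloor : ⌊r i / δ⌋ = ⌊r j / δ⌋ := by
      rw [← Int.natCast_floor_eq_floor (div_nonneg (hr i hi) hδ.le),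
        ← Int.natCast_floor_eq_floor (div_nonneg (hr j hj) hδ.le)]
      exact congrArg _ hij
    have hlt := Int.abs_sub_lt_one_of_floor_eq_floor hfloor
    rw [← sub_div, abs_div, abs_of_pos hδ, div_lt_one hδ] at hlt
    exact (hsep i hi j hj hne).not_gt hlt
  calc ∑ i ∈ S, clippedInvSq K (r i) ≤ ∑ i ∈ S, clippedInvSq K (bucket i * δ) :=
        sum_le_sum fun i hi => clippedInvSq_antitoneOn K (Set.mem_Ici.mpr (by positivity))
          (Set.mem_Ici.mpr (hr i hi)) (hbucket i hi)
    _ = ∑ k ∈ S.image bucket, clippedInvSq K (k * δ) :=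
        (sum_image (f := fun k : ℕ => clippedInvSq K (k * δ)) hinj).symm
    _ ≤ K + 3 * √K / δ := sum_clippedInvSq_natCast_mul_le hK hδ _

lemma nint_sub_le (y z : ℝ) : nint (y - z) ≤ |(y - round y) - (z - round z)| := by
  calc nint (y - z) ≤ |(y - z) - ((round y - round z : ℤ) : ℝ)| := round_le _ _
    _ = |(y - round y) - (z - round z)| := by push_cast; ring_nf

lemma nint_neg (x : ℝ) : nint (-x) = nint x := by
  have key : ∀ y : ℝ, nint (-y) ≤ nint y := fun y => by
    calc nint (-y) ≤ |-y - ((-round y : ℤ) : ℝ)| := round_le _ _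
      _ = nint y := by rw [nint, ← abs_neg]; push_cast; ring_nf
  exact le_antisymm (key x) (by simpa using key (-x))

lemma nint_intCast_mul (n : ℤ) (φ : ℝ) : nint ((n : ℝ) * φ) = nint ((n.natAbs : ℝ) * φ) := by
  obtain ⟨m, rfl | rfl⟩ := Int.eq_nat_or_neg n
  · simp
  · simp [nint_neg]

/-- Split the points by the sign of `x - round x`: on each half the distances `‖x‖` are
`δ`-separated reals. -/
lemma sum_clippedInvSq_nint_le_of_separated {ι : Type*} (S : Finset ι) (x : ι → ℝ) {K δ : ℝ}
    (hK : 0 < K) (hδ : 0 < δ) (hsep : ∀ i ∈ S, ∀ j ∈ S, i ≠ j → δ ≤ nint (x i - x j)) :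
    ∑ i ∈ S, clippedInvSq K (nint (x i)) ≤ 2 * K + 6 * √K / δ := by
  set ρ : ι → ℝ := fun i => x i - round (x i)
  have same_sign : ∀ i j, (0 ≤ ρ i ↔ 0 ≤ ρ j) → nint (x i - x j) ≤ |nint (x i) - nint (x j)| := by
    intro i j hij
    refine (nint_sub_le _ _).trans_eq ?_
    change |ρ i - ρ j| = |(|ρ i| - |ρ j|)|
    by_cases hi : 0 ≤ ρ i
    · rw [abs_of_nonneg hi, abs_of_nonneg (hij.mp hi)]
    · rw [abs_of_neg (not_le.mp hi), abs_of_neg (not_le.mp (mt hij.mpr hi)), ← abs_neg]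
      ring_nf
  have half : ∀ T ⊆ S, (∀ i ∈ T, ∀ j ∈ T, (0 ≤ ρ i ↔ 0 ≤ ρ j)) →
      ∑ i ∈ T, clippedInvSq K (nint (x i)) ≤ K + 3 * √K / δ := fun T hT hsign =>
    sum_clippedInvSq_le_of_separated T _ hK hδ (fun i _ => abs_nonneg _) fun i hi j hj hne =>
      (hsep i (hT hi) j (hT hj) hne).trans (same_sign i j (hsign i hi j hj))
  rw [← sum_filter_add_sum_filter_not S (fun i => 0 ≤ ρ i)]
  calc _ ≤ (K + 3 * √K / δ) + (K + 3 * √K / δ) := by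
        refine add_le_add (half _ (filter_subset _ _) ?_) (half _ (filter_subset _ _) ?_) <;>
        · intro i hi j hj
          simp only [mem_filter] at hi hj
          tauto
    _ = 2 * K + 6 * √K / δ := by ring

lemma le_nint_sub_of_badlyApproximable {φ C : ℝ}
    (hba : ∀ h : ℕ, 0 < h → C / (h : ℝ) ≤ nint ((h : ℝ) * φ)) (hC : 0 < C) (t : ℝ) {a b h h' : ℤ}
    (hh : h ∈ Icc a b) (hh' : h' ∈ Icc a b) (hne : h ≠ h') :
    C / (Icc a b).card ≤ nint ((t + h * φ) - (t + h' * φ)) := by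
  rw [mem_Icc] at hh hh'
  have hcard : (h - h').natAbs ≤ (Icc a b).card := by
    rw [Int.card_Icc]
    omega
  have hpos : 0 < (h - h').natAbs := Int.natAbs_pos.mpr (sub_ne_zero.mpr hne)
  calc C / (Icc a b).card ≤ C / (h - h').natAbs := by gcongr
    _ ≤ nint (((h - h').natAbs : ℝ) * φ) := hba _ hpos
    _ = nint ((t + h * φ) - (t + h' * φ)) := by
      rw [← nint_intCast_mul]
      push_cast
      ring_nf

theorem stmt9_general (φ C : ℝ) (hC : 0 < C)
    (hba : ∀ h : ℕ, 0 < h → C / (h : ℝ) ≤ nint ((h : ℝ) * φ)) :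
    ∃ c : ℝ, 0 < c ∧ ∀ a b : ℤ, ∀ t K : ℝ, 1 ≤ K →
      ∑ h ∈ Finset.Icc a b,
          (if nint (t + (h : ℝ) * φ) = 0 then K
            else min K ((nint (t + (h : ℝ) * φ)) ^ 2)⁻¹) ≤
        c * (Real.sqrt K * ((Finset.Icc a b).card : ℝ) +
              K * Real.log (2 + ((Finset.Icc a b).card : ℝ))) := by
  refine ⟨6 / C + 4, by positivity, fun a b t K hK => ?_⟩
  rcases (Icc a b).eq_empty_or_nonempty with hI | hI
  · simp only [hI, sum_empty, card_empty, Nat.cast_zero]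
    positivity
  set N : ℝ := ((Icc a b).card : ℝ)
  have hN : 0 < N := Nat.cast_pos.mpr hI.card_pos
  have hlog : 1 / 2 ≤ Real.log (2 + N) := by
    linarith [Real.log_two_gt_d9, Real.log_le_log two_pos (by linarith : (2 : ℝ) ≤ 2 + N)]
  calc _ = ∑ h ∈ Icc a b, clippedInvSq K (nint (t + h * φ)) := rfl
    _ ≤ 2 * K + 6 * √K / (C / N) :=
      sum_clippedInvSq_nint_le_of_separated _ _ (by linarith) (by positivity)
        fun h hh h' hh' hne => le_nint_sub_of_badlyApproximable hba hC t hh hh' hne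
    _ = 6 / C * (√K * N) + 2 * K := by field_simp; ring
    _ ≤ (6 / C + 4) * (√K * N + K * Real.log (2 + N)) := by
      have : 0 ≤ 6 / C * (K * Real.log (2 + N)) := by positivity
      nlinarith [mul_pos (Real.sqrt_pos.mpr (by linarith : 0 < K)) hN]

theorem stmt9 (φ C : ℝ) (hC : 0 < C) (hirr : Irrational φ)
    (hba : ∀ h : ℕ, 0 < h → C / (h : ℝ) ≤ nint ((h : ℝ) * φ)) :
    ∃ c : ℝ, 0 < c ∧ ∀ a b : ℤ, ∀ t K : ℝ, 1 ≤ K →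
      ∑ h ∈ Finset.Icc a b,
          (if nint (t + (h : ℝ) * φ) = 0 then K
            else min K ((nint (t + (h : ℝ) * φ)) ^ 2)⁻¹) ≤
        c * (Real.sqrt K * ((Finset.Icc a b).card : ℝ) +
              K * Real.log (2 + ((Finset.Icc a b).card : ℝ))) :=
  stmt9_general φ C hC hba
end

section
/- Let φ be an irrational with ‖hφ‖ ≥ C/h for all positive integers h (some C > 0). Then for every positive integer Q and real t, ∑_{h=1}^{Q} min(Q, ‖t + hφ‖^{−1}) ≪ Q·log(2Q), with implied constant depending only on φ. -/
open Finset
open scoped Classical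

/-! The signed representatives `t + hφ - round (t + hφ)`, `1 ≤ h ≤ Q`, are `C/Q`-separated in `ℝ`
by the badly approximable hypothesis. Cutting `[-1/2, 1/2]` into shells `±[kδ, (k+1)δ)` with
`δ = C/Q`, each shell holds at most one of them, and a point in the `k`-th shell contributes at
most `2/((k+1)δ)`. Summing over the shells gives `(4Q/C) · (1 + log (Q/C)) ≪ Q log 2Q`. -/

/-- `min(Q, u⁻¹)`, with the value `Q` at `u = 0` (where `u⁻¹ = 0`). -/
noncomputable def cappedInv (Q u : ℝ) : ℝ := if u = 0 then Q else min Q u⁻¹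

lemma cappedInv_le_two_div_add {Q u δ : ℝ} (hu : 0 ≤ u) (hδ : 0 < δ) (hδQ : δ * Q ≤ 1) :
    cappedInv Q u ≤ 2 / (u + δ) := by
  have hsmall : u ≤ δ → Q ≤ 2 / (u + δ) := fun h =>
    calc Q ≤ 2 / (2 * δ) := by rw [le_div_iff₀ (by linarith)]; linarith
      _ ≤ 2 / (u + δ) := div_le_div_of_nonneg_left zero_le_two (by positivity) (by linarith)
  have hlarge : δ ≤ u → u⁻¹ ≤ 2 / (u + δ) := fun h => by
    rw [inv_eq_one_div, div_le_div_iff₀ (by linarith) (by linarith)]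
    linarith
  unfold cappedInv
  split_ifs with h0
  · exact hsmall (h0 ▸ hδ.le)
  · rcases le_total u δ with h | h
    · exact (min_le_left _ _).trans (hsmall h)
    · exact (min_le_right _ _).trans (hlarge h)

lemma abs_sub_lt_of_floor_div_eq {a b δ : ℝ} (ha : 0 ≤ a) (hb : 0 ≤ b) (hδ : 0 < δ)
    (h : ⌊a / δ⌋₊ = ⌊b / δ⌋₊) : |a - b| < δ := by
  have h' : ⌊a / δ⌋ = ⌊b / δ⌋ := by
    rw [← Int.natCast_floor_eq_floor (div_nonneg ha hδ.le),
      ← Int.natCast_floor_eq_floor (div_nonneg hb hδ.le), h]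
  have := Int.abs_sub_lt_one_of_floor_eq_floor h'
  rwa [← sub_div, abs_div, abs_of_pos hδ, div_lt_one hδ] at this

lemma abs_sub_lt_of_floor_abs_div_eq {x y δ : ℝ} (hδ : 0 < δ) (hsign : 0 ≤ x ↔ 0 ≤ y)
    (h : ⌊|x| / δ⌋₊ = ⌊|y| / δ⌋₊) : |x - y| < δ := by
  have := abs_sub_lt_of_floor_div_eq (abs_nonneg x) (abs_nonneg y) hδ h
  rcases le_or_gt 0 x with hx | hx
  · rwa [abs_of_nonneg hx, abs_of_nonneg (hsign.1 hx)] at this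
  · have hy : y < 0 := not_le.1 (mt hsign.2 hx.not_ge)
    rwa [abs_of_neg hx, abs_of_neg hy, neg_sub_neg, abs_sub_comm] at this

/-- Each shell `±[kδ, (k+1)δ)` contains at most one of the `δ`-separated points. -/
theorem sum_floor_abs_div_le_of_separated {ι : Type*} (s : Finset ι) (y : ι → ℝ) {δ b : ℝ}
    (hδ : 0 < δ) (hb : ∀ i ∈ s, |y i| ≤ b)
    (hsep : ∀ i ∈ s, ∀ j ∈ s, i ≠ j → δ ≤ |y i - y j|) (f : ℕ → ℝ) (hf : ∀ k, 0 ≤ f k) :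
    ∑ i ∈ s, f ⌊|y i| / δ⌋₊ ≤ 2 * ∑ k ∈ range (⌊b / δ⌋₊ + 1), f k := by
  set shell : ι → ℕ × Bool := fun i => (⌊|y i| / δ⌋₊, decide (0 ≤ y i))
  have hinj : Set.InjOn shell s := by
    intro i hi j hj hij
    by_contra hne
    simp only [shell, Prod.ext_iff, decide_eq_decide] at hij
    exact (hsep i hi j hj hne).not_gt (abs_sub_lt_of_floor_abs_div_eq hδ hij.2 hij.1)
  have hmaps : ∀ i ∈ s, shell i ∈ range (⌊b / δ⌋₊ + 1) ×ˢ (univ : Finset Bool) := by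
    intro i hi
    simp only [shell, mem_product, mem_range, mem_univ, and_true, Nat.lt_succ_iff]
    exact Nat.floor_le_floor (div_le_div_of_nonneg_right (hb i hi) hδ.le)
  calc ∑ i ∈ s, f ⌊|y i| / δ⌋₊ = ∑ p ∈ s.image shell, f p.1 :=
        (sum_image (f := fun p => f p.1) hinj).symm
    _ ≤ ∑ p ∈ range (⌊b / δ⌋₊ + 1) ×ˢ (univ : Finset Bool), f p.1 :=
      sum_le_sum_of_subset_of_nonneg (image_subset_iff.2 hmaps) fun _ _ _ => hf _
    _ = 2 * ∑ k ∈ range (⌊b / δ⌋₊ + 1), f k := by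
      rw [sum_product, mul_sum]
      simp [two_mul]

theorem sum_cappedInv_le_of_separated {ι : Type*} (s : Finset ι) (y : ι → ℝ) {δ Q : ℝ}
    (hδ : 0 < δ) (hδ2 : δ ≤ 1 / 2) (hδQ : δ * Q ≤ 1) (hy : ∀ i ∈ s, |y i| ≤ 1 / 2)
    (hsep : ∀ i ∈ s, ∀ j ∈ s, i ≠ j → δ ≤ |y i - y j|) :
    ∑ i ∈ s, cappedInv Q |y i| ≤ 4 / δ * (1 + Real.log (1 / δ)) := by
  set N := ⌊1 / 2 / δ⌋₊
  have hpoint : ∀ i ∈ s, cappedInv Q |y i| ≤ 2 / δ * ((⌊|y i| / δ⌋₊ : ℝ) + 1)⁻¹ := by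
    intro i _
    have hfloor : (⌊|y i| / δ⌋₊ : ℝ) * δ ≤ |y i| :=
      (le_div_iff₀ hδ).1 (Nat.floor_le (by positivity))
    calc cappedInv Q |y i| ≤ 2 / (|y i| + δ) := cappedInv_le_two_div_add (abs_nonneg _) hδ hδQ
      _ ≤ 2 / ((⌊|y i| / δ⌋₊ + 1) * δ) :=
        div_le_div_of_nonneg_left zero_le_two (by positivity) (by linarith)
      _ = 2 / δ * ((⌊|y i| / δ⌋₊ : ℝ) + 1)⁻¹ := by field_simp
  have hN : (N : ℝ) + 1 ≤ 1 / δ := by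
    have h1 : (N : ℝ) ≤ 1 / 2 / δ := Nat.floor_le (by positivity)
    have h2 : 1 ≤ 1 / 2 / δ := by rw [le_div_iff₀ hδ]; linarith
    linarith [show 1 / 2 / δ + 1 / 2 / δ = 1 / δ by ring]
  calc ∑ i ∈ s, cappedInv Q |y i|
      ≤ ∑ i ∈ s, 2 / δ * ((⌊|y i| / δ⌋₊ : ℝ) + 1)⁻¹ := sum_le_sum hpoint
    _ ≤ 2 * ∑ k ∈ range (N + 1), 2 / δ * ((k : ℝ) + 1)⁻¹ :=
      sum_floor_abs_div_le_of_separated s y hδ hy hsep (fun k => 2 / δ * ((k : ℝ) + 1)⁻¹)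
        fun _ => by positivity
    _ = 4 / δ * (harmonic (N + 1) : ℝ) := by
      rw [← mul_sum]; simp only [harmonic]; push_cast; ring
    _ ≤ 4 / δ * (1 + Real.log (N + 1 : ℕ)) := by gcongr; exact harmonic_le_one_add_log _
    _ ≤ 4 / δ * (1 + Real.log (1 / δ)) := by
      gcongr
      push_cast
      exact hN

lemma nint_sub_le_abs_sub (x y : ℝ) : nint (x - y) ≤ |(x - round x) - (y - round y)| := by
  calc nint (x - y) ≤ |x - y - ((round x - round y : ℤ) : ℝ)| := round_le _ _
    _ = |(x - round x) - (y - round y)| := by push_cast; ring_nf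

lemma div_le_nint_mul_sub_mul {φ C : ℝ} (hC : 0 ≤ C)
    (hba : ∀ h : ℕ, 0 < h → C / (h : ℝ) ≤ nint ((h : ℝ) * φ))
    {Q i j : ℕ} (hi : i ∈ Icc 1 Q) (hj : j ∈ Icc 1 Q) (hij : i ≠ j) :
    C / Q ≤ nint (i * φ - j * φ) := by
  wlog hlt : j < i generalizing i j
  · rw [← nint_neg, neg_sub]
    exact this hj hi hij.symm (by omega)
  rw [mem_Icc] at hi hj
  have hcast : (i : ℝ) * φ - j * φ = ((i - j : ℕ) : ℝ) * φ := by
    rw [Nat.cast_sub hlt.le]; ring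
  rw [hcast]
  refine le_trans ?_ (hba _ (by omega))
  exact div_le_div_of_nonneg_left hC (by exact_mod_cast Nat.sub_pos_of_lt hlt)
    (by exact_mod_cast (Nat.sub_le i j).trans hi.2)

lemma mul_add_mul_mul_log_le {a b Q : ℝ} (ha : 0 ≤ a) (hb : 0 ≤ b) (hQ : 1 ≤ Q) :
    a * Q + b * Q * Real.log Q ≤ (a / Real.log 2 + b) * Q * Real.log (2 * Q) := by
  have hlog2 : 0 < Real.log 2 := Real.log_pos one_lt_two
  have h2 : Real.log 2 ≤ Real.log (2 * Q) := Real.log_le_log two_pos (by linarith)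
  have hQ2 : Real.log Q ≤ Real.log (2 * Q) := Real.log_le_log (by linarith) (by linarith)
  have hfirst : a * Q ≤ a / Real.log 2 * Q * Real.log (2 * Q) := by
    calc a * Q = a / Real.log 2 * Q * Real.log 2 := by field_simp
      _ ≤ _ := by gcongr
  have hsecond : b * Q * Real.log Q ≤ b * Q * Real.log (2 * Q) := by gcongr
  linarith

theorem stmt10_general (φ C : ℝ) (hC : 0 < C)
    (hba : ∀ h : ℕ, 0 < h → C / (h : ℝ) ≤ nint ((h : ℝ) * φ)) :
    ∃ c : ℝ, 0 < c ∧ ∀ Q : ℕ, 0 < Q → ∀ t : ℝ,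
      ∑ h ∈ Finset.Icc 1 Q,
          (if nint (t + (h : ℝ) * φ) = 0 then (Q : ℝ)
            else min (Q : ℝ) (nint (t + (h : ℝ) * φ))⁻¹) ≤
        c * Q * Real.log (2 * Q) := by
  have hC2 : C ≤ 1 / 2 := by simpa using (hba 1 one_pos).trans (abs_sub_round _)
  have hlogC : 0 ≤ 1 - Real.log C := by linarith [Real.log_nonpos hC.le (by linarith)]
  refine ⟨4 / C * (1 - Real.log C) / Real.log 2 + 4 / C, by positivity, fun Q hQ t => ?_⟩
  have hQ1 : (1 : ℝ) ≤ Q := by exact_mod_cast hQ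
  set y : ℕ → ℝ := fun h => (t + h * φ) - round (t + h * φ)
  have hsep : ∀ i ∈ Icc 1 Q, ∀ j ∈ Icc 1 Q, i ≠ j → C / Q ≤ |y i - y j| := by
    intro i hi j hj hij
    have := nint_sub_le_abs_sub (t + i * φ) (t + j * φ)
    rw [add_sub_add_left_eq_sub] at this
    exact (div_le_nint_mul_sub_mul hC.le hba hi hj hij).trans this
  calc _ = ∑ h ∈ Icc 1 Q, cappedInv Q |y h| := rfl
    _ ≤ 4 / (C / Q) * (1 + Real.log (1 / (C / Q))) :=
      sum_cappedInv_le_of_separated _ y (by positivity)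
        (by rw [div_le_iff₀ (by positivity)]; linarith)
        (by rw [div_mul_cancel₀ _ (by positivity)]; linarith)
        (fun _ _ => abs_sub_round _) hsep
    _ = 4 / C * (1 - Real.log C) * Q + 4 / C * Q * Real.log Q := by
      rw [one_div_div, Real.log_div (by positivity) hC.ne']
      field_simp
      ring
    _ ≤ _ := mul_add_mul_mul_log_le (by positivity) (by positivity) hQ1

theorem stmt10 (φ C : ℝ) (hC : 0 < C) (hirr : Irrational φ)
    (hba : ∀ h : ℕ, 0 < h → C / (h : ℝ) ≤ nint ((h : ℝ) * φ)) :
    ∃ c : ℝ, 0 < c ∧ ∀ Q : ℕ, 0 < Q → ∀ t : ℝ,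
      ∑ h ∈ Finset.Icc 1 Q,
          (if nint (t + (h : ℝ) * φ) = 0 then (Q : ℝ)
            else min (Q : ℝ) (nint (t + (h : ℝ) * φ))⁻¹) ≤
        c * Q * Real.log (2 * Q) :=
  stmt10_general φ C hC hba
end
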